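/- Let n ≥ 1 and let Z : ℕ → (n×n real matrices) satisfy: every Z(t) has all entries nonnegative, and for every t, Z(t+1) = Z(t) − ζ(t) + B(t) entrywise, where ζ(t) is an n×n permutation matrix and B(t) is an n×n matrix with all entries in [0,1]. Fix t and k, and let χ be an n×n permutation matrix attaining ω*(Z(t)) = max_{σ} Σ_i Z(t)_{i,σ(i)}. Then Σ_{i,k} χ_{ik}·Z(t+k)_{ik} ≥ ω*(Z(t+k)) − 2·k·n. -/
import Mathlib


/-- The max-weight matching value `ω*(M) = max_σ Σ_i M_{i,σ(i)}`. -/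
noncomputable def maxWeight {n : ℕ} (M : Matrix (Fin n) (Fin n) ℝ) : ℝ :=
  Finset.univ.sup' ⟨1, Finset.mem_univ 1⟩ fun σ : Equiv.Perm (Fin n) => ∑ i, M i (σ i)

lemma matchSum_eq {n : ℕ} (M χ : Matrix (Fin n) (Fin n) ℝ) (τ : Equiv.Perm (Fin n))
    (hχ : ∀ i k, χ i k = if τ i = k then (1 : ℝ) else 0) :
    ∑ i, ∑ k, χ i k * M i k = ∑ i, M i (τ i) := by
  refine Finset.sum_congr rfl fun i _ => ?_
  rw [Finset.sum_eq_single (τ i)]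
  · simp [hχ]
  · intro k _ hk; simp [hχ, Ne.symm hk]
  · simp

/-- The max-weight matching value `ω*(M) = max_σ Σ_i M_{i,σ(i)}`. -/
theorem stmt_13 (n : ℕ) (hn : 1 ≤ n)
    (Z ζ B : ℕ → Matrix (Fin n) (Fin n) ℝ)
    (hZpos : ∀ t i k, 0 ≤ Z t i k)
    (hζperm : ∀ t, ∃ σ : Equiv.Perm (Fin n),
      ∀ i k, ζ t i k = if σ i = k then (1 : ℝ) else 0)
    (hB0 : ∀ t i k, 0 ≤ B t i k) (hB1 : ∀ t i k, B t i k ≤ 1)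
    (hupd : ∀ t i k, Z (t + 1) i k = Z t i k - ζ t i k + B t i k)
    (t m : ℕ)
    (χ : Matrix (Fin n) (Fin n) ℝ) (τ : Equiv.Perm (Fin n))
    (hχ : ∀ i k, χ i k = if τ i = k then (1 : ℝ) else 0)
    (hχopt : ∑ i, ∑ k, χ i k * Z t i k = maxWeight (Z t)) :
    ∑ i, ∑ k, χ i k * Z (t + m) i k
      ≥ maxWeight (Z (t + m)) - 2 * (m : ℝ) * (n : ℝ) := by
  -- single-step entrywise bounds
  have hstep : ∀ s i k, Z s i k - 1 ≤ Z (s + 1) i k ∧ Z (s + 1) i k ≤ Z s i k + 1 := by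
    intro s i k
    obtain ⟨σ, hσ⟩ := hζperm s
    have hζ0 : (0 : ℝ) ≤ ζ s i k := by rw [hσ]; split <;> norm_num
    have hζ1 : ζ s i k ≤ 1 := by rw [hσ]; split <;> norm_num
    have := hB0 s i k; have := hB1 s i k
    constructor <;> rw [hupd] <;> linarith
  -- m-step bound on matching weights, two-sided
  have key : ∀ σ : Equiv.Perm (Fin n),
      (∑ i, Z t i (σ i)) - m * n ≤ ∑ i, Z (t + m) i (σ i) ∧
      ∑ i, Z (t + m) i (σ i) ≤ (∑ i, Z t i (σ i)) + m * n := by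
    intro σ
    induction m with
    | zero => simp
    | succ j ih =>
      have h1 : ∑ i, Z (t + j + 1) i (σ i) ≤ (∑ i, Z (t + j) i (σ i)) + n := by
        have : ∑ i, Z (t + j + 1) i (σ i) ≤ ∑ i, (Z (t + j) i (σ i) + 1) :=
          Finset.sum_le_sum fun i _ => (hstep (t + j) i (σ i)).2
        simpa [Finset.sum_add_distrib] using this
      have h2 : (∑ i, Z (t + j) i (σ i)) - n ≤ ∑ i, Z (t + j + 1) i (σ i) := by
        have : ∑ i, (Z (t + j) i (σ i) - 1) ≤ ∑ i, Z (t + j + 1) i (σ i) :=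
          Finset.sum_le_sum fun i _ => (hstep (t + j) i (σ i)).1
        simpa [Finset.sum_sub_distrib] using this
      have e : t + (j + 1) = t + j + 1 := by ring
      rw [e]
      push_cast
      constructor <;> [nlinarith [ih.1]; nlinarith [ih.2]]
  have hτZt : ∑ i, Z t i (τ i) = maxWeight (Z t) := by
    rw [← matchSum_eq (Z t) χ τ hχ]; exact hχopt
  rw [matchSum_eq (Z (t + m)) χ τ hχ]
  -- maxWeight (Z (t+m)) ≤ maxWeight (Z t) + m*n
  have hub : maxWeight (Z (t + m)) ≤ maxWeight (Z t) + m * n := by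
    apply Finset.sup'_le
    intro σ _
    have h := (key σ).2
    have hle : (∑ i, Z t i (σ i)) ≤ maxWeight (Z t) :=
      Finset.le_sup' (fun σ : Equiv.Perm (Fin n) => ∑ i, Z t i (σ i)) (Finset.mem_univ σ)
    linarith
  have hlb := (key τ).1
  rw [hτZt] at hlb
  have : (2 : ℝ) * m * n = m * n + m * n := by ring
  linarith
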